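/- The sequence 0 → R(−3)² → R(−2)³ → I → 0 is exact, where the first map is given by the transpose of α = [[x₀, x₀], [x₁, 0], [0, x₂]] (i.e., v ↦ αᵀ-action: (a,b) ↦ (x₀a + x₀b, x₁a, x₂b) suitably arranged) and the second map sends (g₀,g₁,g₂) to g₀x₁x₂ − g₁x₀x₂ − g₂x₀x₁, with I = (x₀x₁, x₀x₂, x₁x₂) ⊂ R = k[x₀,x₁,x₂]. -/

import Mathlib

/-!
A syzygy `(g₀, g₁, g₂)` of the minors `yz, xz, xy` is found by divisibility: `x` is prime and
divides neither `y` nor `z`, so `x ∣ g₀`; cancelling `x` leaves a relation showing `y ∣ g₁`, and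
cancelling `y` then determines `g₂`. In `k[x₀, x₁, x₂]` the variables are pairwise non-associate
primes, which gives exactness in the middle; the other two conditions are direct computations.
-/

open MvPolynomial

noncomputable def alphaT (k : Type*) [Field k] :
    (Fin 2 → MvPolynomial (Fin 3) k) →ₗ[MvPolynomial (Fin 3) k]
      (Fin 3 → MvPolynomial (Fin 3) k) :=
  (!![X 0, X 0; X 1, 0; 0, X 2] : Matrix (Fin 3) (Fin 2) (MvPolynomial (Fin 3) k)).mulVecLin

noncomputable def minorsMap (k : Type*) [Field k] :
    (Fin 3 → MvPolynomial (Fin 3) k) →ₗ[MvPolynomial (Fin 3) k] MvPolynomial (Fin 3) k :=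
  LinearMap.smulRight (LinearMap.proj 0) (X 1 * X 2)
    - LinearMap.smulRight (LinearMap.proj 1) (X 0 * X 2)
    - LinearMap.smulRight (LinearMap.proj 2) (X 0 * X 1)

theorem exists_eq_of_minors_syzygy {R : Type*} [CommRing R] [IsDomain R] {x y z : R}
    (hx : Prime x) (hy : Prime y) (hxy : ¬x ∣ y) (hxz : ¬x ∣ z) (hyz : ¬y ∣ z) {g₀ g₁ g₂ : R}
    (h : g₀ * (y * z) - g₁ * (x * z) - g₂ * (x * y) = 0) :
    ∃ a b, x * a + x * b = g₀ ∧ y * a = g₁ ∧ z * b = g₂ := by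
  have hx_dvd : x ∣ g₀ * (y * z) := ⟨g₁ * z + g₂ * y, by linear_combination h⟩
  obtain ⟨c, rfl⟩ : x ∣ g₀ :=
    (hx.dvd_or_dvd hx_dvd).resolve_right fun h ↦ (hx.dvd_or_dvd h).elim hxy hxz
  have hc : c * (y * z) = g₁ * z + g₂ * y :=
    mul_left_cancel₀ hx.ne_zero (by linear_combination h)
  obtain ⟨a, rfl⟩ : y ∣ g₁ :=
    (hy.dvd_or_dvd ⟨c * z - g₂, by linear_combination -hc⟩).resolve_right hyz
  refine ⟨a, c - a, by ring, rfl, mul_left_cancel₀ hy.ne_zero ?_⟩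
  linear_combination hc

section

variable (k : Type*) [Field k]

theorem alphaT_apply (v : Fin 2 → MvPolynomial (Fin 3) k) :
    alphaT k v = ![X 0 * v 0 + X 0 * v 1, X 1 * v 0, X 2 * v 1] := by
  funext j
  fin_cases j <;> simp [alphaT, Matrix.mulVec, dotProduct, Fin.sum_univ_two]

theorem minorsMap_apply (g : Fin 3 → MvPolynomial (Fin 3) k) :
    minorsMap k g = g 0 * (X 1 * X 2) - g 1 * (X 0 * X 2) - g 2 * (X 0 * X 1) := by
  simp [minorsMap, smul_eq_mul]

theorem alphaT_injective : Function.Injective (alphaT k) := by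
  rw [injective_iff_map_eq_zero]
  intro v hv
  rw [alphaT_apply] at hv
  have hv₀ : v 0 = 0 := (mul_eq_zero.mp (congrFun hv 1)).resolve_left (X_ne_zero 1)
  have hv₁ : v 1 = 0 := (mul_eq_zero.mp (congrFun hv 2)).resolve_left (X_ne_zero 2)
  funext j
  fin_cases j
  exacts [hv₀, hv₁]

theorem ker_minorsMap : LinearMap.ker (minorsMap k) = LinearMap.range (alphaT k) := by
  have hXX {i j : Fin 3} (hij : i ≠ j) : ¬(X i : MvPolynomial (Fin 3) k) ∣ X j := by
    rwa [X_dvd_X]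
  ext g
  rw [LinearMap.mem_ker, minorsMap_apply]
  constructor
  · intro hg
    obtain ⟨a, b, h₀, h₁, h₂⟩ :=
      exists_eq_of_minors_syzygy X_prime X_prime (hXX (by decide)) (hXX (by decide))
        (hXX (by decide)) hg
    refine ⟨![a, b], ?_⟩
    rw [alphaT_apply]
    funext j
    fin_cases j
    exacts [h₀, h₁, h₂]
  · rintro ⟨v, rfl⟩
    simp only [alphaT_apply, Matrix.cons_val]
    ring

theorem range_minorsMap :
    LinearMap.range (minorsMap k) =
      Ideal.span ({X 0 * X 1, X 0 * X 2, X 1 * X 2} : Set (MvPolynomial (Fin 3) k)) := by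
  ext p
  rw [LinearMap.mem_range, Ideal.span, Submodule.mem_span_triple]
  constructor
  · rintro ⟨g, rfl⟩
    refine ⟨-g 2, -g 1, g 0, ?_⟩
    rw [minorsMap_apply, smul_eq_mul, smul_eq_mul, smul_eq_mul]
    ring
  · rintro ⟨a, b, c, rfl⟩
    refine ⟨![c, -b, -a], ?_⟩
    simp only [minorsMap_apply, Matrix.cons_val, smul_eq_mul]
    ring

end

/-- Hilbert–Burch resolution of the ideal of the three coordinate points. -/
theorem hilbert_burch_resolution (k : Type*) [Field k] :
    Function.Injective (alphaT k) ∧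
    LinearMap.ker (minorsMap k) = LinearMap.range (alphaT k) ∧
    LinearMap.range (minorsMap k) =
      Ideal.span ({X 0 * X 1, X 0 * X 2, X 1 * X 2} : Set (MvPolynomial (Fin 3) k)) :=
  ⟨alphaT_injective k, ker_minorsMap k, range_minorsMap k⟩
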